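/- arXiv:2207.05028 — 2 statements merged into one kernel-verified Lean document; each statement's English description precedes it below -/
import Mathlib

section
/- For a symmetric n×n matrix M over a commutative ring and distinct indices i, j, the Dodgson identity reads det(M)·det(M^{ij,ij}) = det(M^{i,i})·det(M^{j,j}) − det(M^{i,j})², where the off-diagonal cofactor minors are equal: det(M^{i,j}) = det(M^{j,i}). -/
/-!
Replace column `j` of `M` by `e_j` to get `P`, so that `det P = adj M j j` and the double minor is
`det (P.updateCol i e_i)`. Multiplying the latter by `det M` turns `e_i` into column `i` of
`M * adj M`, i.e. `∑ k, adj M k i • M_k`. Every column `M_k` with `k ≠ j` is already a column of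
`P`, so by multilinearity only the terms `k = i` and `k = j` survive: the first contributes
`adj M i i * det P`, the second a column swap of `M.updateCol i e_j`, i.e.
`-adj M j i * adj M i j`.
No division by `det M` is needed, so the identity holds over every commutative ring.
-/

namespace Matrix

variable {l m n α R : Type*}

theorem submatrix_updateCol_swap [DecidableEq n] (A : Matrix m n α) {i j : n} (hij : i ≠ j)
    (u : m → α) :
    (A.updateCol i u).submatrix id (Equiv.swap i j) =
      (A.updateCol j u).updateCol i fun r => A r j := by
  ext r c
  rcases eq_or_ne c i with rfl | hci
  · simp [hij.symm]
  rcases eq_or_ne c j with rfl | hcj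
  · simp [hci]
  · simp [Equiv.swap_apply_of_ne_of_ne hci hcj, hci, hcj]

theorem submatrix_updateCol_of_injective [DecidableEq l] [DecidableEq n] (A : Matrix m n α)
    (e : l → m) {f : l → n} (hf : Function.Injective f) (j : l) (c : m → α) :
    (A.updateCol (f j) c).submatrix e f = (A.submatrix e f).updateCol j (c ∘ e) := by
  ext r s
  by_cases hs : s = j <;> simp [hf.eq_iff, hs]

section Fintype

variable [Fintype n] [DecidableEq n] [CommRing R]

theorem det_updateCol_single (M : Matrix n n R) (i j : n) :
    (M.updateCol j (Pi.single i 1)).det = adjugate M j i := by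
  rw [← det_transpose, ← updateRow_transpose, ← adjugate_apply, ← adjugate_transpose,
    transpose_apply]

/-- The Desnanot–Jacobi identity. -/
theorem det_mul_det_updateCol_single_updateCol_single (M : Matrix n n R) {i j : n}
    (hij : i ≠ j) :
    M.det * ((M.updateCol j (Pi.single j 1)).updateCol i (Pi.single i 1)).det =
      adjugate M i i * adjugate M j j - adjugate M i j * adjugate M j i := by
  set P := M.updateCol j (Pi.single j 1) with hP
  set c : n → R := Function.update (fun k => adjugate M k i) j 0 with hc
  have hcol : M.det • (Pi.single i 1 : n → R) =
      adjugate M j i • (fun r => M r j) + fun r => ∑ k, c k • P r k := by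
    ext r
    have hrow := congr_fun (congr_fun (mul_adjugate M) r) i
    rw [mul_apply, ← Finset.add_sum_erase _ _ (Finset.mem_univ j)] at hrow
    rw [Pi.add_apply, ← Finset.add_sum_erase _ _ (Finset.mem_univ j)]
    have hoff : ∀ k ∈ Finset.univ.erase j, c k • P r k = M r k * adjugate M k i := by
      intro k hk
      rw [hc, Function.update_of_ne (Finset.ne_of_mem_erase hk), hP,
        updateCol_ne (Finset.ne_of_mem_erase hk), smul_eq_mul, mul_comm]
    rw [Finset.sum_congr rfl hoff, hc, Function.update_self, zero_smul, zero_add]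
    simp only [smul_apply, Pi.smul_apply, smul_eq_mul, one_apply, Pi.single_apply] at hrow ⊢
    linear_combination -hrow
  have hswap : (P.updateCol i fun r => M r j).det = -adjugate M i j := by
    rw [← submatrix_updateCol_swap M hij, det_permute', Equiv.Perm.sign_swap hij,
      det_updateCol_single]
    simp
  rw [← det_updateCol_smul, hcol, det_updateCol_add, det_updateCol_smul,
    det_updateCol_sum, hswap, det_updateCol_single, hc, Function.update_of_ne hij, smul_eq_mul]
  ring

end Fintype

theorem IsSymm.det_submatrix_comm [Fintype l] [DecidableEq l] [CommRing R] {M : Matrix n n R}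
    (hM : M.IsSymm) (e f : l → n) : (M.submatrix e f).det = (M.submatrix f e).det := by
  rw [← det_transpose, transpose_submatrix, hM.eq]

section Fin

variable [CommRing R] {k : ℕ}

theorem adjugate_fin_succ_self (A : Matrix (Fin (k + 1)) (Fin (k + 1)) R) (i : Fin (k + 1)) :
    adjugate A i i = (A.submatrix i.succAbove i.succAbove).det := by
  rw [adjugate_fin_succ_eq_det_submatrix, Even.neg_one_pow ⟨i, rfl⟩, one_mul]

theorem IsSymm.adjugate_mul_adjugate_fin_succ {A : Matrix (Fin (k + 1)) (Fin (k + 1)) R}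
    (hA : A.IsSymm) (i j : Fin (k + 1)) :
    A.adjugate i j * A.adjugate j i = (A.submatrix i.succAbove j.succAbove).det ^ 2 := by
  rw [adjugate_fin_succ_eq_det_submatrix, adjugate_fin_succ_eq_det_submatrix,
    hA.det_submatrix_comm j.succAbove, add_comm (j : ℕ)]
  linear_combination (A.submatrix i.succAbove j.succAbove).det ^ 2 *
    (by rw [← mul_pow, neg_one_mul, neg_neg, one_pow] :
      (-1 : R) ^ ((i : ℕ) + j) * (-1) ^ ((i : ℕ) + j) = 1)

theorem det_updateCol_single_updateCol_single_eq_det_submatrix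
    (M : Matrix (Fin (k + 2)) (Fin (k + 2)) R) {i j : Fin (k + 2)} {j' : Fin (k + 1)}
    (hj' : i.succAbove j' = j) :
    ((M.updateCol j (Pi.single j 1)).updateCol i (Pi.single i 1)).det =
      (M.submatrix (i.succAbove ∘ j'.succAbove) (i.succAbove ∘ j'.succAbove)).det := by
  have hsingle :
      (Pi.single (i.succAbove j') 1 : Fin (k + 2) → R) ∘ i.succAbove = Pi.single j' 1 := by
    funext r
    simp [Pi.single_apply, Fin.succAbove_right_injective.eq_iff]
  rw [det_updateCol_single, adjugate_fin_succ_self, ← hj',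
    submatrix_updateCol_of_injective _ _ Fin.succAbove_right_injective, hsingle,
    det_updateCol_single, adjugate_fin_succ_self, submatrix_submatrix]

end Fin

end Matrix

open Matrix

/-- Dodgson identity for a symmetric matrix: the off-diagonal cofactor minors are equal,
and `det M · det M^{ij,ij} = det M^{i,i} · det M^{j,j} − (det M^{i,j})²`. -/
theorem stmt6 {R : Type*} [CommRing R] {n : ℕ}
    (M : Matrix (Fin (n + 2)) (Fin (n + 2)) R) (hM : M.IsSymm)
    (i j : Fin (n + 2)) (hij : i ≠ j)
    (j' : Fin (n + 1)) (hj' : i.succAbove j' = j) :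
    (M.submatrix i.succAbove j.succAbove).det = (M.submatrix j.succAbove i.succAbove).det ∧
    M.det * (M.submatrix (i.succAbove ∘ j'.succAbove) (i.succAbove ∘ j'.succAbove)).det =
      (M.submatrix i.succAbove i.succAbove).det * (M.submatrix j.succAbove j.succAbove).det -
        (M.submatrix i.succAbove j.succAbove).det ^ 2 := by
  refine ⟨hM.det_submatrix_comm _ _, ?_⟩
  rw [← det_updateCol_single_updateCol_single_eq_det_submatrix M hj',
    det_mul_det_updateCol_single_updateCol_single M hij, hM.adjugate_mul_adjugate_fin_succ,
    adjugate_fin_succ_self, adjugate_fin_succ_self]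
end

section
/- Let σ be a permutation of a finite set S. The number of pairs of complementary functions (ε, ε̃) compatible with the collection of unordered pairs {ε(s), ε̃(σ(s))} (i.e. the number of functions ε choosing one element from each two-element set {s₀,s₁}, up to producing the same multiset of pairs) equals 2^c, where c is the number of cycles of σ. -/
/-!
Encode the two edges of `s` as `e (s, true)` and `e (s, false)`, with `e` injective. If `(ε, τ)`
produces the same term as `(ε₀, σ)`, locating the pair at `s` in the original term shows that
either `ε s = ε₀ s` and `τ s = σ s`, or `ε s ≠ ε₀ s` and `τ s = σ⁻¹ s`; moreover agreement with
`ε₀` propagates along `σ`, so by finiteness the set where `ε` differs from `ε₀` is a union of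
cycles of `σ`, on which `τ` runs backwards. Conversely, reversing any union of cycles (and
flipping `ε₀` there) reproduces the term: on a reversed cycle the pair at `s` is the old pair at
`σ⁻¹ s`. Hence the choices correspond to functions from the cycles to `Bool`.
-/

open MulAction Subgroup Equiv Function

theorem Equiv.Perm.SameCycle.mem_of_mapsTo {α : Type*} [Finite α] {f : Perm α} {s : Set α}
    {x y : α} (hs : Set.MapsTo f s s) (h : f.SameCycle x y) (hx : x ∈ s) : y ∈ s := by
  obtain ⟨n, rfl⟩ := h.exists_nat_pow_eq
  rw [Perm.coe_pow]
  exact hs.iterate n hx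

theorem Equiv.Perm.orbitRel_zpowers_le_ker_of_mapsTo {α : Type*} [Finite α] {f : Perm α}
    {r : α → Bool} (hr : Set.MapsTo f {x | r x = false} {x | r x = false}) :
    orbitRel (zpowers f) α ≤ Setoid.ker r := by
  rintro x y ⟨⟨g, hg⟩, rfl⟩
  obtain ⟨k, rfl⟩ := mem_zpowers_iff.1 hg
  have hcycle : f.SameCycle y ((f ^ k) y) := ⟨k, rfl⟩
  have hiff : r ((f ^ k) y) = false ↔ r y = false :=
    ⟨hcycle.symm.mem_of_mapsTo hr, hcycle.mem_of_mapsTo hr⟩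
  simpa [Setoid.ker_def] using hiff

theorem MulAction.apply_smul_eq_of_orbitRel_le_ker {G α β : Type*} [Group G] [MulAction G α]
    {H : Subgroup G} {r : α → β} (hr : orbitRel H α ≤ Setoid.ker r) {g : G} (hg : g ∈ H)
    (x : α) : r (g • x) = r x :=
  hr (mem_orbit x (⟨g, hg⟩ : H))

namespace Equiv.Perm

variable {α : Type*}

def piecewise (r : α → Bool) (f g : Perm α) (hf : ∀ x, r (f x) = r x)
    (hg : ∀ x, r (g x) = r x) : Perm α :=
  subtypeCongr (f.subtypePerm (p := fun x => r x) fun x => by rw [hf])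
    (g.subtypePerm (p := fun x => ¬ r x) fun x => by rw [hg])

theorem piecewise_apply (r : α → Bool) (f g : Perm α) (hf : ∀ x, r (f x) = r x)
    (hg : ∀ x, r (g x) = r x) (x : α) :
    piecewise r f g hf hg x = if r x then f x else g x := by
  by_cases h : r x <;> simp [piecewise, h]

variable (σ : Perm α) {r : α → Bool} (hr : orbitRel (zpowers σ) α ≤ Setoid.ker r)
include hr

def reverseCycles : Perm α :=
  piecewise r σ⁻¹ σ (apply_smul_eq_of_orbitRel_le_ker hr (inv_mem (mem_zpowers σ)))
    (apply_smul_eq_of_orbitRel_le_ker hr (mem_zpowers σ))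

theorem reverseCycles_apply (x : α) : reverseCycles σ hr x = if r x then σ⁻¹ x else σ x :=
  piecewise_apply ..

end Equiv.Perm

namespace ScalarProduct

variable {S E : Type*} [Fintype S]

def term (e : S × Bool → E) (ε : S → Bool) (τ : Perm S) : Multiset (Sym2 E) :=
  Finset.univ.val.map fun s => s(e (s, ε s), e (τ s, !ε (τ s)))

theorem term_reverseCycles (e : S × Bool → E) (σ : Perm S) {r : S → Bool}
    (hr : orbitRel (zpowers σ) S ≤ Setoid.ker r) (ε₀ : S → Bool) :
    term e (fun s => xor (r s) (ε₀ s)) (σ.reverseCycles hr) = term e ε₀ σ := by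
  have hσ : ∀ s, r (σ s) = r s := apply_smul_eq_of_orbitRel_le_ker hr (mem_zpowers σ)
  have hσinv : ∀ s, r (σ⁻¹ s) = r s :=
    apply_smul_eq_of_orbitRel_le_ker hr (inv_mem (mem_zpowers σ))
  let ρ : Perm S := Perm.piecewise r σ⁻¹ 1 hσinv fun _ => rfl
  unfold term
  conv_rhs => rw [← Multiset.map_univ_val_equiv ρ, Multiset.map_map]
  refine Multiset.map_congr rfl fun s _ => ?_
  have hρ : ρ s = if r s then σ⁻¹ s else s := Perm.piecewise_apply ..
  rw [Function.comp_apply, hρ, Perm.reverseCycles_apply]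
  cases hs : r s
  · simp only [hσ, hs, Bool.false_xor, Bool.false_eq_true, if_false]
  · simp only [if_true, hσinv, hs, Bool.true_xor, Bool.not_not]
    rw [Perm.coe_inv, apply_symm_apply]
    exact Sym2.eq_swap

section

variable {e : S × Bool → E} (he : Injective e) {ε ε₀ : S → Bool} {τ σ : Perm S}
include he

theorem term_eq_cases (h : term e ε τ = term e ε₀ σ) (s : S) :
    (ε s = ε₀ s ∧ τ s = σ s ∧ ε (σ s) = ε₀ (σ s)) ∨
      (ε s ≠ ε₀ s ∧ σ (τ s) = s ∧ ε (τ s) ≠ ε₀ (τ s)) := by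
  have hmem : s(e (s, ε s), e (τ s, !ε (τ s))) ∈ term e ε₀ σ :=
    h ▸ Multiset.mem_map_of_mem _ (Finset.mem_univ_val s)
  obtain ⟨t, -, ht⟩ := Multiset.mem_map.1 hmem
  rcases Sym2.eq_iff.1 ht with ⟨h₁, h₂⟩ | ⟨h₁, h₂⟩
  · obtain ⟨rfl, h₁⟩ := Prod.mk.inj (he h₁)
    obtain ⟨h₂, h₃⟩ := Prod.mk.inj (he h₂)
    simp_all
  · obtain ⟨rfl, h₁⟩ := Prod.mk.inj (he h₁)
    obtain ⟨h₂, h₃⟩ := Prod.mk.inj (he h₂)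
    simp_all

theorem orbitRel_le_ker_xor_of_term_eq (h : term e ε τ = term e ε₀ σ) :
    orbitRel (zpowers σ) S ≤ Setoid.ker fun s => xor (ε s) (ε₀ s) :=
  Perm.orbitRel_zpowers_le_ker_of_mapsTo fun s hs => by
    rcases term_eq_cases he h s with ⟨-, -, h'⟩ | ⟨h', -⟩ <;> simp_all

theorem eq_reverseCycles_of_term_eq (h : term e ε τ = term e ε₀ σ) :
    τ = σ.reverseCycles (orbitRel_le_ker_xor_of_term_eq he h) := by
  ext s
  rw [Perm.reverseCycles_apply]
  rcases term_eq_cases he h s with ⟨hε, hτ, -⟩ | ⟨hε, hτ, -⟩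
  · simp [hε, hτ]
  · simp [hε, eq_symm_apply, hτ]

end

def termFiberEquiv {e : S × Bool → E} (he : Injective e) (σ : Perm S) (ε₀ : S → Bool) :
    {x : (S → Bool) × Perm S // term e x.1 x.2 = term e ε₀ σ} ≃
      {r : S → Bool // orbitRel (zpowers σ) S ≤ Setoid.ker r} where
  toFun x := ⟨fun s => xor (x.1.1 s) (ε₀ s), orbitRel_le_ker_xor_of_term_eq he x.2⟩
  invFun r := ⟨(fun s => xor (r.1 s) (ε₀ s), σ.reverseCycles r.2), term_reverseCycles e σ r.2 ε₀⟩
  left_inv x := Subtype.ext <| Prod.ext (funext fun s => by simp)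
    (eq_reverseCycles_of_term_eq he x.2).symm
  right_inv r := Subtype.ext <| funext fun s => by simp

end ScalarProduct

open ScalarProduct in
theorem stmt8_general {S E : Type*} [Fintype S]
    (p : S → E × E)
    (hinj : Function.Injective fun x : S × Bool => if x.2 then (p x.1).1 else (p x.1).2)
    (σ : Equiv.Perm S) (ε₀ : S → Bool) :
    (letI choose : (S → Bool) → S → E := fun ε s => if ε s then (p s).1 else (p s).2
     letI cochoose : (S → Bool) → S → E := fun ε s => if ε s then (p s).2 else (p s).1
     letI term : (S → Bool) → Equiv.Perm S → Multiset (Sym2 E) := fun ε τ =>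
       Finset.univ.val.map fun s => Sym2.mk (choose ε s) (cochoose ε (τ s))
     Nat.card {x : (S → Bool) × Equiv.Perm S // term x.1 x.2 = term ε₀ σ}) =
      2 ^ Nat.card (MulAction.orbitRel.Quotient (Subgroup.zpowers σ) S) := by
  set e : S × Bool → E := fun x => if x.2 then (p x.1).1 else (p x.1).2
  have hterm (ε : S → Bool) (τ : Perm S) :
      (Finset.univ.val.map fun s => s(if ε s then (p s).1 else (p s).2,
        if ε (τ s) then (p (τ s)).2 else (p (τ s)).1)) = term e ε τ :=
    Multiset.map_congr rfl fun s _ => by cases ε (τ s) <;> rfl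
  simp only [hterm]
  rw [Nat.card_congr ((termFiberEquiv hinj σ ε₀).trans (Setoid.liftEquiv _)), Nat.card_fun,
    Nat.card_eq_fintype_card, Fintype.card_bool]

/-- Each `s ∈ S` carries a pair of edges `p s = (s₀, s₁)`; a function `ε : S → Bool`
chooses one of them, `ε̃` the other.  Given a permutation `σ` of `S`, the term produced is
the multiset of unordered pairs `{ε(s), ε̃(σ(s))}`.  Provided all the `2|S|` edges are
distinct, the number of choices `(ε, σ')` producing the same term as a given `(ε₀, σ)`
is `2^c`, where `c` is the number of cycles of `σ`. -/
theorem stmt8 {S E : Type*} [Fintype S] [DecidableEq S] [DecidableEq E]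
    (p : S → E × E)
    (hinj : Function.Injective fun x : S × Bool => if x.2 then (p x.1).1 else (p x.1).2)
    (σ : Equiv.Perm S) (ε₀ : S → Bool) :
    (letI choose : (S → Bool) → S → E := fun ε s => if ε s then (p s).1 else (p s).2
     letI cochoose : (S → Bool) → S → E := fun ε s => if ε s then (p s).2 else (p s).1
     letI term : (S → Bool) → Equiv.Perm S → Multiset (Sym2 E) := fun ε τ =>
       Finset.univ.val.map fun s => Sym2.mk (choose ε s) (cochoose ε (τ s))
     Nat.card {x : (S → Bool) × Equiv.Perm S // term x.1 x.2 = term ε₀ σ}) =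
      2 ^ Nat.card (MulAction.orbitRel.Quotient (Subgroup.zpowers σ) S) :=
  stmt8_general p hinj σ ε₀
end
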